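/- Fix a d×d real symmetric positive definite matrix A. The function X ↦ tr( ( (A ⊗ A)^{1/2} (X ⊗ X) (A ⊗ A)^{1/2} )^{1/2} ) is concave on the convex set of d×d real symmetric positive definite matrices. -/

import Mathlib

open Matrix
open scoped Kronecker

/-- The (unique) positive semidefinite square root of a positive semidefinite real matrix,
extended by zero to arbitrary matrices. -/
noncomputable def msqrt {n : Type*} [Fintype n] [DecidableEq n]
    (M : Matrix n n ℝ) : Matrix n n ℝ :=
  @dite _ (M.PosSemidef) (Classical.dec _) (fun h => h.1.eigenvectorUnitary.1 * diagonal ((↑) ∘ (√·) ∘ h.1.eigenvalues) *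
    (star h.1.eigenvectorUnitary : Matrix n n ℝ)) (fun _ => 0)

/-! With `S = A^{1/2}` we have `(A ⊗ A)^{1/2} = S ⊗ S`, so the objective equals `g (S X S)` where
`g C = (tr C^{1/2})²`, and it suffices that `g` is concave on positive definite matrices.
Cauchy–Schwarz for the trace pairing, applied to `Q^{1/2}` and `Q^{-1/2} C^{1/2}`, gives
`g C ≤ tr (Q⁻¹ C) · tr Q` for every positive definite `Q`, with equality at `Q = C^{1/2}`.
Thus `g` is an infimum of linear functions of `C`, hence concave. -/

open scoped MatrixOrder

lemma msqrt_eq_cfcSqrt {n : Type*} [Fintype n] [DecidableEq n] {M : Matrix n n ℝ}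
    (hM : M.PosSemidef) : msqrt M = CFC.sqrt M := by
  rw [msqrt, dif_pos hM, CFC.sqrt_eq_cfc, cfc_nnreal_eq_real _ M, hM.1.cfc_eq]
  simp [IsHermitian.cfc, Function.comp_def, hM.eigenvalues_nonneg]

namespace Matrix

open scoped ComplexOrder in
theorem convex_setOf_posDef {n 𝕜 : Type*} [RCLike 𝕜] :
    Convex ℝ {X : Matrix n n 𝕜 | X.PosDef} :=
  convex_iff_forall_pos.2 fun _ hX _ hY _ _ ha hb _ => (hX.smul ha).add (hY.smul hb)

open scoped ComplexOrder in
theorem PosSemidef.sqrt_kronecker {n m 𝕜 : Type*} [Fintype n] [DecidableEq n] [Fintype m]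
    [DecidableEq m] [RCLike 𝕜] {M : Matrix n n 𝕜} {N : Matrix m m 𝕜}
    (hM : M.PosSemidef) (hN : N.PosSemidef) :
    CFC.sqrt (M ⊗ₖ N) = CFC.sqrt M ⊗ₖ CFC.sqrt N := by
  rw [CFC.sqrt_eq_iff _ _ (hM.kronecker hN).nonneg
    ((CFC.sqrt_nonneg M).posSemidef.kronecker (CFC.sqrt_nonneg N).posSemidef).nonneg,
    ← mul_kronecker_mul, CFC.sqrt_mul_sqrt_self M hM.nonneg, CFC.sqrt_mul_sqrt_self N hN.nonneg]

theorem sq_trace_transpose_mul_le {m n R : Type*} [Fintype m] [Fintype n] [CommRing R]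
    [LinearOrder R] [IsStrictOrderedRing R] (M N : Matrix m n R) :
    (Mᵀ * N).trace ^ 2 ≤ (Mᵀ * M).trace * (Nᵀ * N).trace := by
  simp only [← vec_dotProduct_vec, dotProduct, ← sq]
  exact Finset.sum_mul_sq_le_sq_mul_sq _ _ _

theorem sq_trace_le_trace_inv_mul_mul_trace {n : Type*} [Fintype n] [DecidableEq n]
    {P Q : Matrix n n ℝ} (hP : P.IsHermitian) (hQ : Q.PosDef) :
    P.trace ^ 2 ≤ (Q⁻¹ * (P * P)).trace * Q.trace := by
  set S := CFC.sqrt Q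
  have hSS : S * S = Q := CFC.sqrt_mul_sqrt_self Q hQ.posSemidef.nonneg
  have hST : Sᵀ = S := (CFC.sqrt_nonneg Q).posSemidef.isHermitian
  have hS : IsUnit S.det := (isUnit_iff_isUnit_det S).1
    (IsStrictlyPositive.sqrt Q hQ.isStrictlyPositive).isUnit
  have hPT : Pᵀ = P := hP
  calc P.trace ^ 2 = (Sᵀ * (S⁻¹ * P)).trace ^ 2 := by
        rw [hST, ← mul_assoc, mul_nonsing_inv _ hS, Matrix.one_mul]
    _ ≤ (Sᵀ * S).trace * ((S⁻¹ * P)ᵀ * (S⁻¹ * P)).trace := sq_trace_transpose_mul_le _ _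
    _ = (Q⁻¹ * (P * P)).trace * Q.trace := by
      rw [mul_comm, hST, hSS, transpose_mul, transpose_nonsing_inv, hST, hPT, Matrix.mul_assoc,
        ← Matrix.mul_assoc S⁻¹, ← Matrix.mul_inv_rev, hSS, trace_mul_comm, Matrix.mul_assoc]

theorem concaveOn_sq_trace_sqrt {n : Type*} [Fintype n] [DecidableEq n] :
    ConcaveOn ℝ {C : Matrix n n ℝ | C.PosDef} fun C => (CFC.sqrt C).trace ^ 2 := by
  refine ⟨convex_setOf_posDef, fun X hX Y hY a b ha hb hab => ?_⟩
  have hZ : (a • X + b • Y).PosDef := convex_setOf_posDef hX hY ha hb hab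
  set Q := CFC.sqrt (a • X + b • Y)
  have hQ : Q.PosDef := (IsStrictlyPositive.sqrt _ hZ.isStrictlyPositive).posDef
  have bound {C : Matrix n n ℝ} (hC : C.PosDef) :
      (CFC.sqrt C).trace ^ 2 ≤ (Q⁻¹ * C).trace * Q.trace := by
    simpa only [CFC.sqrt_mul_sqrt_self C hC.posSemidef.nonneg] using
      sq_trace_le_trace_inv_mul_mul_trace (CFC.sqrt_nonneg C).posSemidef.isHermitian hQ
  have attained : (Q⁻¹ * (a • X + b • Y)).trace = Q.trace := by
    rw [← CFC.sqrt_mul_sqrt_self (a • X + b • Y) hZ.posSemidef.nonneg, ← Matrix.mul_assoc,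
      nonsing_inv_mul _ ((isUnit_iff_isUnit_det Q).1 hQ.isUnit), Matrix.one_mul]
  calc a • (CFC.sqrt X).trace ^ 2 + b • (CFC.sqrt Y).trace ^ 2
      ≤ a * ((Q⁻¹ * X).trace * Q.trace) + b * ((Q⁻¹ * Y).trace * Q.trace) := by
        simp only [smul_eq_mul]
        gcongr
        exacts [bound hX, bound hY]
    _ = (Q⁻¹ * (a • X + b • Y)).trace * Q.trace := by
        rw [Matrix.mul_add, trace_add, mul_smul_comm, mul_smul_comm, trace_smul, trace_smul,
          smul_eq_mul, smul_eq_mul]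
        ring
    _ = (CFC.sqrt (a • X + b • Y)).trace ^ 2 := by rw [attained, sq]

end Matrix

lemma trace_msqrt_conj_kronecker_self {n : Type*} [Fintype n] [DecidableEq n]
    {A X : Matrix n n ℝ} (hA : A.PosSemidef) (hX : X.PosSemidef) :
    (msqrt (msqrt (A ⊗ₖ A) * (X ⊗ₖ X) * msqrt (A ⊗ₖ A))).trace =
      (CFC.sqrt (CFC.sqrt A * X * CFC.sqrt A)).trace ^ 2 := by
  have hS : (CFC.sqrt A)ᴴ = CFC.sqrt A := (CFC.sqrt_nonneg A).posSemidef.isHermitian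
  have hC : (CFC.sqrt A * X * CFC.sqrt A).PosSemidef := by
    simpa only [hS] using hX.conjTranspose_mul_mul_same (CFC.sqrt A)
  rw [msqrt_eq_cfcSqrt (hA.kronecker hA), hA.sqrt_kronecker hA, ← mul_kronecker_mul,
    ← mul_kronecker_mul, msqrt_eq_cfcSqrt (hC.kronecker hC), hC.sqrt_kronecker hC,
    trace_kronecker, sq]

/-- **Concavity of the Bures–Wasserstein trace term with Kronecker structure.**
Fix a `d × d` real symmetric positive definite matrix `A`.  The map
`X ↦ tr( ((A ⊗ A)^{1/2} (X ⊗ X) (A ⊗ A)^{1/2})^{1/2} )` is concave on the convex set of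
`d × d` real symmetric positive definite matrices.
(For real matrices, positive definiteness `Matrix.PosDef` includes symmetry.) -/
theorem trace_sqrt_kronecker_concave {d : ℕ}
    (A : Matrix (Fin d) (Fin d) ℝ) (hA : A.PosDef) :
    ConcaveOn ℝ {X : Matrix (Fin d) (Fin d) ℝ | X.PosDef}
      (fun X => (msqrt (msqrt (A ⊗ₖ A) * (X ⊗ₖ X) * msqrt (A ⊗ₖ A))).trace) := by
  set S := CFC.sqrt A
  have hS : IsUnit S := (IsStrictlyPositive.sqrt A hA.isStrictlyPositive).isUnit
  have hS_star : star S = S := (CFC.sqrt_nonneg A).posSemidef.isHermitian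
  have hconj (X : Matrix (Fin d) (Fin d) ℝ) (hX : X.PosDef) : (S * X * S).PosDef := by
    simpa only [hS_star] using hS.posDef_star_left_conjugate_iff.2 hX
  let conjS := LinearMap.mulRight ℝ S ∘ₗ LinearMap.mulLeft ℝ S
  refine ((concaveOn_sq_trace_sqrt.comp_linearMap conjS).subset hconj
    convex_setOf_posDef).congr fun X hX => ?_
  exact (trace_msqrt_conj_kronecker_self hA.posSemidef (PosDef.posSemidef hX)).symm
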